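/- Let m = 2^n and suppose {A_i}_{i=1}^{N}, with N = 2^(2^n - n - 1), are m×m Hadamard matrices whose combined rows form a maximal set of distinct Hadamard vectors in dimension m. For each pair (i, j) with 1 ≤ i, j ≤ N and each k with 1 ≤ k ≤ m, form the 2m×2m matrix M_{i,j,k} = [[A_i, T^k A_j], [A_i, -T^k A_j]], where T is the cyclic row shift. Then each M_{i,j,k} is a 2m×2m Hadamard matrix, the rows of the N²·m = 2^(2^(n+1) - (n+1) - 1) matrices M_{i,j,k} are pairwise distinct even up to sign (no row of one equals ± a row of another, and within one matrix no two rows are equal up to sign), and together these rows form a maximal set of distinct Hadamard vectors in dimension 2m = 2^(n+1). -/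

import Mathlib

/-- A Hadamard vector: all entries are `±1`. -/
def IsHadamardVector {ι : Type*} (x : ι → ℝ) : Prop :=
  ∀ i, x i = 1 ∨ x i = -1

/-- A Hadamard matrix: all entries `±1` and rows pairwise orthogonal. -/
def IsHadamardMatrix {ι : Type*} [Fintype ι] (H : Matrix ι ι ℝ) : Prop :=
  (∀ i j, H i j = 1 ∨ H i j = -1) ∧
  ∀ i j, i ≠ j → ∑ k, H i k * H j k = 0

/-- A maximal set of distinct Hadamard vectors: a set of Hadamard vectors containing,
for every Hadamard vector `x`, exactly one of `x`, `-x`. -/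
def IsMaximalHadamardSet {ι : Type*} (S : Set (ι → ℝ)) : Prop :=
  (∀ x ∈ S, IsHadamardVector x) ∧
  ∀ x : ι → ℝ, IsHadamardVector x → Xor' (x ∈ S) (-x ∈ S)


/-- The cyclic row shift: `(rowShift A) i = A (i - 1)`, indices mod `m`
(`finRotate m` sends `i` to `i + 1`). -/
def rowShift {m : ℕ} (A : Matrix (Fin m) (Fin m) ℝ) : Matrix (Fin m) (Fin m) ℝ :=
  Matrix.of fun i => A ((finRotate m).symm i)

/-- The `2m × 2m` block matrix `[[A, T^k B], [A, -(T^k B)]]`. -/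
def doubledBlock {m : ℕ} (A B : Matrix (Fin m) (Fin m) ℝ) (k : ℕ) :
    Matrix (Fin m ⊕ Fin m) (Fin m ⊕ Fin m) ℝ :=
  Matrix.fromBlocks A (rowShift^[k] B) A (-(rowShift^[k] B))


/-!
A `±1` vector of length `2m` is a concatenation `(u, v)` of two of length `m`, and the row of
`M_{i,j,k}` in position `a` of the top (bottom) half is `(A_i a, A_j (a - k))`
(resp. `(A_i a, -A_j (a - k))`). The `N · m = 2^(m-1)` given rows hit every `±1` vector up to
sign, hence each exactly once up to sign. As `k` runs over `1, …, m`, `a - k` runs over all of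
`Fin m`, so the rows of the `M_{i,j,k}` are exactly the vectors `(u, v)` with `u` a given row and
`v` arbitrary, each obtained once; whether `x` or `-x` is among them is decided by its first half.
Each `M_{i,j,k}` is Hadamard since `[[A, B], [A, -B]]` times its transpose is
`diag(AAᵀ + BBᵀ, AAᵀ + BBᵀ)`, and shifting rows preserves orthogonality.
-/

open Fin.NatCast Fin.CommRing

section HadamardVectors

variable {ι : Type*}

theorem IsHadamardVector.neg {x : ι → ℝ} (hx : IsHadamardVector x) : IsHadamardVector (-x) :=
  fun i => (hx i).symm.imp (fun h => by simp [h]) (fun h => by simp [h])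

theorem isHadamardVector_sum_iff {ι' : Type*} {x : ι ⊕ ι' → ℝ} :
    IsHadamardVector x ↔ IsHadamardVector (x ∘ Sum.inl) ∧ IsHadamardVector (x ∘ Sum.inr) :=
  Sum.forall

theorem IsMaximalHadamardSet.mem_or_neg_mem_iff {S : Set (ι → ℝ)} (hS : IsMaximalHadamardSet S)
    {x : ι → ℝ} : x ∈ S ∨ -x ∈ S ↔ IsHadamardVector x :=
  ⟨fun h => h.elim (hS.1 x) fun h => by simpa using (hS.1 _ h).neg,
    fun hx => Xor.or (hS.2 x hx)⟩

theorem IsMaximalHadamardSet.image2_sumElim {S : Set (ι → ℝ)} (hS : IsMaximalHadamardSet S) :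
    IsMaximalHadamardSet (Set.image2 Sum.elim S {v : ι → ℝ | IsHadamardVector v}) := by
  have mem_iff : ∀ x : ι ⊕ ι → ℝ, x ∈ Set.image2 Sum.elim S {v | IsHadamardVector v} ↔
      x ∘ Sum.inl ∈ S ∧ IsHadamardVector (x ∘ Sum.inr) := fun x =>
    ⟨by rintro ⟨u, hu, v, hv, rfl⟩; exact ⟨hu, hv⟩,
      fun h => ⟨_, h.1, _, h.2, Sum.elim_comp_inl_inr x⟩⟩
  refine ⟨fun x hx => ?_, fun x hx => ?_⟩
  · obtain ⟨hl, hr⟩ := (mem_iff x).1 hx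
    exact isHadamardVector_sum_iff.2 ⟨hS.1 _ hl, hr⟩
  obtain ⟨hl, hr⟩ := isHadamardVector_sum_iff.1 hx
  simpa only [mem_iff, Pi.neg_comp, hr, hr.neg, and_true] using hS.2 _ hl

def hadamardVectorOfBool (b : ι → Bool) : ι → ℝ := fun i => if b i then 1 else -1

theorem hadamardVectorOfBool_injective : Function.Injective (hadamardVectorOfBool (ι := ι)) :=
  fun b b' h => funext fun i => by
    have := congrFun h i
    revert this
    by_cases hb : b i <;> by_cases hb' : b' i <;> norm_num [hadamardVectorOfBool, hb, hb']

theorem range_hadamardVectorOfBool :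
    Set.range (hadamardVectorOfBool (ι := ι)) = {x | IsHadamardVector x} := by
  ext x
  refine ⟨?_, fun hx => ⟨fun i => decide (x i = 1), funext fun i => ?_⟩⟩
  · rintro ⟨b, rfl⟩ i
    by_cases hb : b i <;> simp [hadamardVectorOfBool, hb]
  · rcases hx i with h | h <;> norm_num [hadamardVectorOfBool, h]

theorem IsMaximalHadamardSet.injective_sumElim_neg [Fintype ι] {κ : Type*} [Fintype κ]
    {f : κ → ι → ℝ} (hf : IsMaximalHadamardSet (Set.range f))
    (hcard : 2 * Fintype.card κ = 2 ^ Fintype.card ι) : Function.Injective (Sum.elim f (-f)) := by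
  classical
  have hrange : Finset.univ.image (Sum.elim f (-f)) = Finset.univ.image hadamardVectorOfBool := by
    apply Finset.coe_injective
    simp only [Finset.coe_image, Finset.coe_univ, Set.image_univ, Set.Sum.elim_range,
      range_hadamardVectorOfBool]
    ext x
    simpa [neg_eq_iff_eq_neg] using hf.mem_or_neg_mem_iff (x := x)
  rw [← Set.injOn_univ, ← Finset.coe_univ, ← Finset.card_image_iff, hrange,
    Finset.card_image_of_injective _ hadamardVectorOfBool_injective]
  simp only [Finset.card_univ, Fintype.card_sum, Fintype.card_fun, Fintype.card_bool]
  omega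

end HadamardVectors

section HadamardMatrices

open scoped Matrix

variable {ι : Type*} [Fintype ι]

theorem IsHadamardMatrix.mul_transpose [DecidableEq ι] {H : Matrix ι ι ℝ}
    (hH : IsHadamardMatrix H) : H * Hᵀ = (Fintype.card ι : ℝ) • 1 := by
  ext i j
  rw [Matrix.mul_apply, Matrix.smul_apply, Matrix.one_apply]
  by_cases hij : i = j
  · subst hij
    have : ∀ k, H i k * H i k = 1 := fun k => by rcases hH.1 i k with h | h <;> simp [h]
    simp [this]
  · simpa [hij] using hH.2 i j hij

theorem isHadamardMatrix_of_mul_transpose [DecidableEq ι] {H : Matrix ι ι ℝ} {c : ℝ}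
    (hentries : ∀ i j, H i j = 1 ∨ H i j = -1) (h : H * Hᵀ = c • 1) : IsHadamardMatrix H :=
  ⟨hentries, fun i j hij => by simpa [Matrix.mul_apply, hij] using congrFun (congrFun h i) j⟩

theorem IsHadamardMatrix.submatrix_id {H : Matrix ι ι ℝ} (hH : IsHadamardMatrix H) {σ : ι → ι}
    (hσ : Function.Injective σ) : IsHadamardMatrix (H.submatrix σ id) :=
  ⟨fun i j => hH.1 (σ i) j, fun i j hij => hH.2 (σ i) (σ j) (hσ.ne hij)⟩

theorem IsHadamardMatrix.fromBlocks_neg {A B : Matrix ι ι ℝ} (hA : IsHadamardMatrix A)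
    (hB : IsHadamardMatrix B) : IsHadamardMatrix (Matrix.fromBlocks A B A (-B)) := by
  classical
  refine isHadamardMatrix_of_mul_transpose (c := 2 * Fintype.card ι) ?_ ?_
  · rintro (i | i) (j | j)
    · exact hA.1 i j
    · exact hB.1 i j
    · exact hA.1 i j
    · exact IsHadamardVector.neg (hB.1 i) j
  · rw [Matrix.fromBlocks_transpose, Matrix.fromBlocks_multiply, hA.mul_transpose,
      Matrix.transpose_neg, Matrix.mul_neg, Matrix.neg_mul, Matrix.neg_mul, Matrix.mul_neg,
      neg_neg, hB.mul_transpose, ← Matrix.fromBlocks_one, Matrix.fromBlocks_smul]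
    simp only [add_neg_cancel, smul_zero]
    congr 1 <;> rw [mul_smul, two_smul]

end HadamardMatrices

section Doubling

variable {m : ℕ}

theorem IsHadamardMatrix.rowShift {B : Matrix (Fin m) (Fin m) ℝ} (hB : IsHadamardMatrix B) :
    IsHadamardMatrix (rowShift B) :=
  hB.submatrix_id (finRotate m).symm.injective

theorem IsHadamardMatrix.doubledBlock {A B : Matrix (Fin m) (Fin m) ℝ} (hA : IsHadamardMatrix A)
    (hB : IsHadamardMatrix B) (k : ℕ) : IsHadamardMatrix (doubledBlock A B k) :=
  hA.fromBlocks_neg (Function.Iterate.rec IsHadamardMatrix hB (fun _ h => h.rowShift) k)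

variable [NeZero m]

theorem rowShift_iterate_apply (B : Matrix (Fin m) (Fin m) ℝ) (k : ℕ) (i : Fin m) :
    (rowShift^[k] B) i = B (i - k) := by
  induction k generalizing B with
  | zero => simp
  | succ k ih =>
    rw [Function.iterate_succ_apply, ih]
    show B ((finRotate m).symm (i - k)) = _
    rw [finRotate_symm_apply, Nat.cast_succ, sub_sub]

theorem doubledBlock_inl (A B : Matrix (Fin m) (Fin m) ℝ) (k : ℕ) (r : Fin m) :
    doubledBlock A B k (Sum.inl r) = Sum.elim (A r) (B (r - k)) := by
  ext (c | c) <;> simp [doubledBlock, rowShift_iterate_apply]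

theorem doubledBlock_inr (A B : Matrix (Fin m) (Fin m) ℝ) (k : ℕ) (r : Fin m) :
    doubledBlock A B k (Sum.inr r) = Sum.elim (A r) (-B (r - k)) := by
  ext (c | c) <;> simp [doubledBlock, rowShift_iterate_apply]

theorem Fin.bijOn_natCast_Icc : Set.BijOn (Nat.cast : ℕ → Fin m) (Set.Icc 1 m) Set.univ := by
  refine ⟨Set.mapsTo_univ _ _, fun k hk k' hk' h => ?_, fun d _ =>
    ⟨(d - 1).val + 1, ⟨by omega, (d - 1).isLt⟩, by simp⟩⟩
  have hpred : ((k - 1 : ℕ) : Fin m) = ((k' - 1 : ℕ) : Fin m) := by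
    rw [Nat.cast_sub hk.1, Nat.cast_sub hk'.1, h]
  have := congrArg Fin.val hpred
  rw [Fin.val_cast_of_lt (by grind), Fin.val_cast_of_lt (by grind)] at this
  grind

variable {κ : Type*} {A : κ → Matrix (Fin m) (Fin m) ℝ}

theorem iUnion_range_doubledBlock (hS : IsMaximalHadamardSet (⋃ i, Set.range fun r => A i r)) :
    (⋃ i, ⋃ j, ⋃ k ∈ Finset.Icc 1 m, Set.range fun r => doubledBlock (A i) (A j) k r) =
      Set.image2 Sum.elim (⋃ i, Set.range fun r => A i r) {v | IsHadamardVector v} := by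
  have row_mem : ∀ i a, A i a ∈ ⋃ i, Set.range fun r => A i r := fun i a =>
    Set.mem_iUnion.2 ⟨i, a, rfl⟩
  ext x
  simp only [Set.mem_iUnion, Set.mem_range, Finset.mem_Icc]
  constructor
  · rintro ⟨i, j, k, -, r | a, rfl⟩
    · exact ⟨_, row_mem i r, _, hS.1 _ (row_mem j _), (doubledBlock_inl _ _ _ _).symm⟩
    · exact ⟨_, row_mem i a, _, (hS.1 _ (row_mem j _)).neg, (doubledBlock_inr _ _ _ _).symm⟩
  · rintro ⟨_, hu, v, hv, rfl⟩
    obtain ⟨i, a, rfl⟩ := Set.mem_iUnion.1 hu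
    have hv' := hS.mem_or_neg_mem_iff.2 hv
    simp only [Set.mem_iUnion, Set.mem_range] at hv'
    rcases hv' with ⟨j, b, hb⟩ | ⟨j, b, hb⟩ <;>
      obtain ⟨k, hk, hkab⟩ := Fin.bijOn_natCast_Icc.surjOn (Set.mem_univ (a - b))
    · exact ⟨i, j, k, hk, Sum.inl a, by rw [doubledBlock_inl, hkab, sub_sub_cancel, hb]⟩
    · exact ⟨i, j, k, hk, Sum.inr a, by
        rw [doubledBlock_inr, hkab, sub_sub_cancel, hb, neg_neg]⟩

theorem doubledBlock_row_ne_neg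
    (hrows : Function.Injective (Sum.elim (Function.uncurry A) (-Function.uncurry A)))
    (i j i' j' : κ) (k k' : ℕ) (r r' : Fin m ⊕ Fin m) :
    doubledBlock (A i) (A j) k r ≠ -doubledBlock (A i') (A j') k' r' := by
  have hneg : ∀ a a', A i a ≠ -A i' a' := fun a a' =>
    (Sum.elim_injective.1 hrows).2.2 (i, a) (i', a')
  rcases r with a | a <;> rcases r' with a' | a' <;> intro h <;>
    simp only [doubledBlock_inl, doubledBlock_inr] at h <;>
    exact hneg a a' (by simpa [Pi.neg_comp] using congrArg (· ∘ Sum.inl) h)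

theorem eq_of_doubledBlock_row_eq
    (hrows : Function.Injective (Sum.elim (Function.uncurry A) (-Function.uncurry A)))
    {i j i' j' : κ} {k k' : ℕ} (hk : k ∈ Set.Icc 1 m) (hk' : k' ∈ Set.Icc 1 m)
    {r r' : Fin m ⊕ Fin m} (h : doubledBlock (A i) (A j) k r = doubledBlock (A i') (A j') k' r') :
    (i, j, k, r) = (i', j', k', r') := by
  obtain ⟨hinj, -, hneg⟩ := Sum.elim_injective.1 hrows
  have halves : ∀ {a a'}, A i a = A i' a' → A j (a - k) = A j' (a' - k') →
      i = i' ∧ j = j' ∧ k = k' ∧ a = a' := by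
    intro a a' h₁ h₂
    obtain ⟨rfl, rfl⟩ := Prod.ext_iff.1 (@hinj (i, a) (i', a') h₁)
    obtain ⟨rfl, hka⟩ := Prod.ext_iff.1 (@hinj (j, a - k) (j', a - k') h₂)
    exact ⟨rfl, rfl, Fin.bijOn_natCast_Icc.injOn hk hk' (sub_right_injective hka), rfl⟩
  rcases r with a | a <;> rcases r' with a' | a' <;>
    simp only [doubledBlock_inl, doubledBlock_inr, Sum.elim_eq_iff, neg_inj] at h
  · obtain ⟨rfl, rfl, rfl, rfl⟩ := halves h.1 h.2; rfl
  · exact absurd h.2 (hneg (j, _) (j', _))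
  · exact absurd h.2.symm (hneg (j', _) (j, _))
  · obtain ⟨rfl, rfl, rfl, rfl⟩ := halves h.1 h.2; rfl

end Doubling

theorem hadamard_induction_step (n : ℕ)
    (A : Fin (2 ^ (2 ^ n - n - 1)) → Matrix (Fin (2 ^ n)) (Fin (2 ^ n)) ℝ)
    (hA : ∀ i, IsHadamardMatrix (A i))
    (hmax : IsMaximalHadamardSet (⋃ i, Set.range fun r => A i r)) :
    -- the number of matrices formed is `N² · m = 2^(2^(n+1) - (n+1) - 1)`
    (2 ^ (2 ^ n - n - 1)) ^ 2 * 2 ^ n = 2 ^ (2 ^ (n + 1) - (n + 1) - 1) ∧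
    -- each `M_{i,j,k} = [[A_i, T^k A_j], [A_i, -T^k A_j]]` is a `2m × 2m` Hadamard matrix
    (∀ i j, ∀ k : ℕ, 1 ≤ k → k ≤ 2 ^ n → IsHadamardMatrix (doubledBlock (A i) (A j) k)) ∧
    -- the rows of the matrices `M_{i,j,k}` are pairwise distinct even up to sign
    (∀ i j, ∀ k : ℕ, 1 ≤ k → k ≤ 2 ^ n → ∀ i' j', ∀ k' : ℕ, 1 ≤ k' → k' ≤ 2 ^ n →
      ∀ r r' : Fin (2 ^ n) ⊕ Fin (2 ^ n), (i, j, k, r) ≠ (i', j', k', r') →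
        doubledBlock (A i) (A j) k r ≠ doubledBlock (A i') (A j') k' r' ∧
        doubledBlock (A i) (A j) k r ≠ -(doubledBlock (A i') (A j') k' r')) ∧
    -- together these rows form a maximal set of distinct Hadamard vectors in dimension `2m`
    IsMaximalHadamardSet
      (⋃ i, ⋃ j, ⋃ k ∈ Finset.Icc 1 (2 ^ n),
        Set.range fun r => doubledBlock (A i) (A j) k r) := by
  have hcard : 2 * Fintype.card (Fin (2 ^ (2 ^ n - n - 1)) × Fin (2 ^ n)) =
      2 ^ Fintype.card (Fin (2 ^ n)) := by
    rw [Fintype.card_prod, Fintype.card_fin, Fintype.card_fin, ← pow_add, ← pow_succ']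
    have := n.lt_two_pow_self
    congr 1
    omega
  have hrows : Function.Injective (Sum.elim (Function.uncurry A) (-Function.uncurry A)) := by
    refine IsMaximalHadamardSet.injective_sumElim_neg ?_ hcard
    convert hmax using 1
    ext x
    simp only [Set.mem_range, Set.mem_iUnion, Prod.exists]
    rfl
  refine ⟨?_, fun i j k _ _ => (hA i).doubledBlock (hA j) k,
    fun i j k hk₁ hk₂ i' j' k' hk₁' hk₂' r r' hne =>
      ⟨fun h => hne (eq_of_doubledBlock_row_eq hrows ⟨hk₁, hk₂⟩ ⟨hk₁', hk₂'⟩ h),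
        doubledBlock_row_ne_neg hrows i j i' j' k k' r r'⟩, ?_⟩
  · rw [← pow_mul, ← pow_add, pow_succ]
    have := n.lt_two_pow_self
    congr 1
    omega
  · rw [iUnion_range_doubledBlock hmax]
    exact hmax.image2_sumElim
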